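/- arXiv:1606.00002 — 2 statements merged into one kernel-verified Lean document; each statement's English description precedes it below -/
import Mathlib

section
/- Let S be a nonempty feasible set and let f₁, f₂, …, f_q : S → ℝ be real-valued objective functions. For each i, let Eᵢ* ∈ ℝ satisfy Eᵢ* ≤ fᵢ(x) for every x ∈ S (for instance Eᵢ* is the minimum value of fᵢ over S). If x* ∈ S minimizes the squared distance function x ↦ Σᵢ₌₁^q (fᵢ(x) − Eᵢ*)² over S, then x* is a Pareto optimal solution: there is no x ∈ S such that fᵢ(x) ≤ fᵢ(x*) for all i = 1, …, q and f_k(x) < f_k(x*) for at least one index k. -/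
/-- Minimizing the squared distance to an ideal vector of lower bounds yields a
Pareto optimal solution. -/
theorem squared_distance_pareto {X : Type*} {S : Set X} (hS : S.Nonempty)
    {q : ℕ} (f : Fin q → X → ℝ) (Estar : Fin q → ℝ)
    (hE : ∀ i, ∀ x ∈ S, Estar i ≤ f i x)
    (xstar : X) (hxstar : xstar ∈ S)
    (hmin : ∀ x ∈ S,
      ∑ i, (f i xstar - Estar i) ^ 2 ≤ ∑ i, (f i x - Estar i) ^ 2) :
    ¬ ∃ x ∈ S, (∀ i, f i x ≤ f i xstar) ∧ ∃ k, f k x < f k xstar := by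
  rintro ⟨x, hx, hle, k, hk⟩
  have hlt : ∑ i, (f i x - Estar i) ^ 2 < ∑ i, (f i xstar - Estar i) ^ 2 := by
    refine Finset.sum_lt_sum ?_ ?_
    · intro i _
      have h0 : (0:ℝ) ≤ f i x - Estar i := sub_nonneg.2 (hE i x hx)
      exact pow_le_pow_left₀ h0 (by linarith [hle i]) 2
    · refine ⟨k, Finset.mem_univ k, ?_⟩
      have h0 : (0:ℝ) ≤ f k x - Estar k := sub_nonneg.2 (hE k x hx)
      have : f k x - Estar k < f k xstar - Estar k := by linarith
      nlinarith
  exact absurd (hmin x hx) (not_le.2 hlt)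
end

section
/- Let S be a nonempty feasible set and let f₁, f₂, …, f_q : S → ℝ be real-valued objective functions. For each i, let Eᵢ* ∈ ℝ satisfy Eᵢ* ≤ fᵢ(x) for every x ∈ S. If x* ∈ S minimizes the Euclidean distance function x ↦ √(Σᵢ₌₁^q (fᵢ(x) − Eᵢ*)²) over S, then x* is a Pareto optimal solution: there is no x ∈ S such that fᵢ(x) ≤ fᵢ(x*) for all i = 1, …, q and f_k(x) < f_k(x*) for at least one index k. -/
/-- Minimizing the Euclidean distance to an ideal vector of lower bounds yields
a Pareto optimal solution. -/
theorem distance_pareto {X : Type*} {S : Set X} (hS : S.Nonempty)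
    {q : ℕ} (f : Fin q → X → ℝ) (Estar : Fin q → ℝ)
    (hE : ∀ i, ∀ x ∈ S, Estar i ≤ f i x)
    (xstar : X) (hxstar : xstar ∈ S)
    (hmin : ∀ x ∈ S,
      Real.sqrt (∑ i, (f i xstar - Estar i) ^ 2) ≤
        Real.sqrt (∑ i, (f i x - Estar i) ^ 2)) :
    ¬ ∃ x ∈ S, (∀ i, f i x ≤ f i xstar) ∧ ∃ k, f k x < f k xstar := by
  rintro ⟨x, hx, hle, k, hk⟩
  have hsum : (∑ i, (f i x - Estar i) ^ 2) < ∑ i, (f i xstar - Estar i) ^ 2 := by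
    apply Finset.sum_lt_sum
    · intro i _
      have h1 : (0:ℝ) ≤ f i x - Estar i := sub_nonneg.2 (hE i x hx)
      exact pow_le_pow_left₀ h1 (by linarith [hle i]) 2
    · refine ⟨k, Finset.mem_univ k, ?_⟩
      have h1 : (0:ℝ) ≤ f k x - Estar k := sub_nonneg.2 (hE k x hx)
      have := pow_lt_pow_left₀ (show f k x - Estar k < f k xstar - Estar k by linarith) h1 two_ne_zero
      exact this
  have := hmin x hx
  have h2 : Real.sqrt (∑ i, (f i x - Estar i) ^ 2) < Real.sqrt (∑ i, (f i xstar - Estar i) ^ 2) := by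
    apply Real.sqrt_lt_sqrt _ hsum
    exact Finset.sum_nonneg fun i _ => sq_nonneg _
  linarith
end
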